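/- The number of connected components of the structured ε-pseudospectrum Λ_{S,ε}(A) is at most n. -/

import Mathlib

/-!
Eigenvalues move continuously: if `B x` has an eigenvalue in an open set `U`, so does `B y` for
`y` near `x`, because a monic polynomial of degree `n` that is smaller than `δ ^ n` at `μ` has a
root within `δ` of `μ`; and by compactness the parameters for which the spectrum meets a compact
set form a closed set. Along the segment `t ↦ A + M_S(t z)`, `t ∈ [0, 1]`, all spectra lie in the
compact set `Λ = Λ_{S,ε}(A)`. If a component of `Λ` contained no eigenvalue of `A`, a relatively
clopen part of `Λ` around it would avoid them too (in a compact Hausdorff space components are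
intersections of clopen sets), and the spectrum would have to leave that part along the segment.
So every component contains one of the at most `n` eigenvalues of `A`.
-/

open Matrix Polynomial Set

noncomputable def MS {n : ℕ} (S : Finset (Fin n × Fin n))
    (z : EuclideanSpace ℂ {p : Fin n × Fin n // p ∈ S}) : Matrix (Fin n) (Fin n) ℂ :=
  fun i j => if h : (i, j) ∈ S then z ⟨(i, j), h⟩ else 0

/-- The structured ε-pseudospectrum `Λ_{S,ε}(A)`. -/
noncomputable def structPseudo {n : ℕ} (A : Matrix (Fin n) (Fin n) ℂ)
    (S : Finset (Fin n × Fin n)) (ε : ℝ) : Set ℂ :=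
  ⋃ z ∈ {z : EuclideanSpace ℂ {p : Fin n × Fin n // p ∈ S} | ‖z‖ ≤ ε},
    spectrum ℂ (A + MS S z)

/-- The strict structured ε-pseudospectrum `Λ'_{S,ε}(A)`. -/
noncomputable def structPseudoStrict {n : ℕ} (A : Matrix (Fin n) (Fin n) ℂ)
    (S : Finset (Fin n × Fin n)) (ε : ℝ) : Set ℂ :=
  ⋃ z ∈ {z : EuclideanSpace ℂ {p : Fin n × Fin n // p ∈ S} | ‖z‖ < ε},
    spectrum ℂ (A + MS S z)

open Topology Filter

namespace Polynomial

theorem Splits.exists_mem_roots_norm_sub_lt {𝕜 : Type*} [NormedField 𝕜] {p : 𝕜[X]}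
    (hp : p.Splits) (hm : p.Monic) {x : 𝕜} {δ : ℝ} (hδ : 0 ≤ δ)
    (h : ‖p.eval x‖ < δ ^ p.natDegree) : ∃ r ∈ p.roots, ‖x - r‖ < δ := by
  by_contra! hfar
  refine h.not_ge ?_
  calc δ ^ p.natDegree = (p.roots.map fun _ => δ).prod := by
        simp [hp.natDegree_eq_card_roots]
    _ ≤ (p.roots.map fun r => ‖x - r‖).prod :=
        Multiset.prod_map_le_prod_map₀ _ _ (fun _ _ => hδ) hfar
    _ = ‖p.eval x‖ := by
        simpa [hp.eval_eq_prod_roots_of_monic hm, Multiset.map_map] using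
          (map_multiset_prod (normHom : 𝕜 →*₀ ℝ) (p.roots.map (x - ·))).symm

end Polynomial

theorem exists_isClopen_mem_disjoint_of_disjoint_connectedComponent {X : Type*}
    [TopologicalSpace X] [CompactSpace X] [T2Space X] {x : X} {F : Set X} (hF : IsClosed F)
    (h : Disjoint (connectedComponent x) F) : ∃ V : Set X, IsClopen V ∧ x ∈ V ∧ Disjoint V F := by
  -- Separate in the compact, Hausdorff, totally disconnected space of components.
  have hF' : IsClosed (ConnectedComponents.mk '' F) :=
    (hF.isCompact.image ConnectedComponents.continuous_coe).isClosed
  have hx : ConnectedComponents.mk x ∉ ConnectedComponents.mk '' F := by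
    rintro ⟨y, hy, hyx⟩
    exact h.notMem_of_mem_right hy (ConnectedComponents.coe_eq_coe'.mp hyx)
  obtain ⟨V, hV, hxV, hVF⟩ := compact_exists_isClopen_in_isOpen hF'.isOpen_compl hx
  refine ⟨ConnectedComponents.mk ⁻¹' V, hV.preimage ConnectedComponents.continuous_coe, hxV, ?_⟩
  exact Set.disjoint_left.mpr fun y hyV hyF => hVF hyV ⟨y, hyF, rfl⟩

namespace Matrix

variable {m : Type*} [Fintype m] [DecidableEq m]

theorem ncard_spectrum_le {K : Type*} [Field K] (A : Matrix m m K) :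
    (spectrum K A).ncard ≤ Fintype.card m := by
  classical
  have hsub : spectrum K A ⊆ A.charpoly.roots.toFinset := fun μ hμ => by
    simpa [Polynomial.mem_roots', A.charpoly_monic.ne_zero] using
      mem_spectrum_iff_isRoot_charpoly.mp hμ
  calc (spectrum K A).ncard ≤ (A.charpoly.roots.toFinset : Set K).ncard :=
        Set.ncard_le_ncard hsub (Finset.finite_toSet _)
    _ ≤ Multiset.card A.charpoly.roots := by
        rw [Set.ncard_coe_finset]; exact Multiset.toFinset_card_le _
    _ ≤ A.charpoly.natDegree := A.charpoly.card_roots'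
    _ = Fintype.card m := A.charpoly_natDegree_eq_dim

variable {X : Type*} [TopologicalSpace X]

theorem continuous_eval_charpoly {R : Type*} [CommRing R] [TopologicalSpace R]
    [IsTopologicalRing R] {B : X → Matrix m m R} (hB : Continuous B) {μ : X → R}
    (hμ : Continuous μ) : Continuous fun x => (B x).charpoly.eval (μ x) := by
  simp only [eval_charpoly, scalar_apply]
  exact ((continuous_pi fun _ => hμ).matrix_diagonal.sub hB).matrix_det

theorem isClosed_setOf_mem_spectrum {K : Type*} [Field K] [TopologicalSpace K]
    [IsTopologicalRing K] [T1Space K] {B : X → Matrix m m K} (hB : Continuous B) :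
    IsClosed {p : X × K | p.2 ∈ spectrum K (B p.1)} := by
  simp only [mem_spectrum_iff_isRoot_charpoly, Polynomial.IsRoot.def]
  exact isClosed_eq (continuous_eval_charpoly (hB.comp continuous_fst) continuous_snd)
    continuous_const

theorem isClosed_setOf_spectrum_inter_nonempty {B : X → Matrix m m ℂ} (hB : Continuous B)
    {C : Set ℂ} (hC : IsCompact C) : IsClosed {x | (spectrum ℂ (B x) ∩ C).Nonempty} := by
  have : CompactSpace C := isCompact_iff_compactSpace.mp hC
  have hgraph : IsClosed {p : X × C | (p.2 : ℂ) ∈ spectrum ℂ (B p.1)} :=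
    (isClosed_setOf_mem_spectrum hB).preimage
      (continuous_fst.prodMk (continuous_subtype_val.comp continuous_snd))
  convert isClosedMap_fst_of_compactSpace _ hgraph using 1
  ext x
  simp [Set.Nonempty, and_comm]

theorem isOpen_setOf_spectrum_inter_nonempty {B : X → Matrix m m ℂ} (hB : Continuous B)
    {U : Set ℂ} (hU : IsOpen U) : IsOpen {x | (spectrum ℂ (B x) ∩ U).Nonempty} := by
  refine isOpen_iff_mem_nhds.mpr ?_
  rintro x₀ ⟨μ, hμ, hμU⟩
  obtain ⟨δ, hδ, hball⟩ := Metric.isOpen_iff.mp hU μ hμU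
  have hsmall : ∀ᶠ x in 𝓝 x₀, ‖(B x).charpoly.eval μ‖ < δ ^ Fintype.card m := by
    refine (continuous_eval_charpoly hB continuous_const).norm.continuousAt.eventually_lt
      continuousAt_const ?_
    rw [mem_spectrum_iff_isRoot_charpoly.mp hμ, norm_zero]
    positivity
  filter_upwards [hsmall] with x hx
  rw [← (B x).charpoly_natDegree_eq_dim] at hx
  obtain ⟨r, hr, hμr⟩ := (IsAlgClosed.splits _).exists_mem_roots_norm_sub_lt
    (B x).charpoly_monic hδ.le hx
  refine ⟨r, mem_spectrum_iff_isRoot_charpoly.mpr (Polynomial.mem_roots'.mp hr).2, hball ?_⟩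
  rwa [Metric.mem_ball, dist_comm, dist_eq_norm]

section

attribute [local instance] Matrix.linftyOpNormedAddCommGroup Matrix.linftyOpNormedRing
  Matrix.linftyOpNormedAlgebra

theorem isCompact_biUnion_spectrum {B : X → Matrix m m ℂ} (hB : Continuous B) {s : Set X}
    (hs : IsCompact s) : IsCompact (⋃ x ∈ s, spectrum ℂ (B x)) := by
  obtain ⟨R, hR⟩ := hs.exists_bound_of_continuousOn
    ((hB.norm.mul continuous_const).continuousOn (f := fun x => ‖B x‖ * ‖(1 : Matrix m m ℂ)‖))
  have hbounded : ∀ x ∈ s, spectrum ℂ (B x) ⊆ Metric.closedBall 0 R := fun x hx =>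
    (spectrum.subset_closedBall_norm_mul (B x)).trans
      (Metric.closedBall_subset_closedBall ((le_abs_self _).trans (hR x hx)))
  have himage : ⋃ x ∈ s, spectrum ℂ (B x) =
      Prod.snd '' ((s ×ˢ Metric.closedBall 0 R) ∩ {p | p.2 ∈ spectrum ℂ (B p.1)}) := by
    ext μ
    simp only [Set.mem_iUnion, Set.mem_image, Set.mem_inter_iff, Set.mem_prod, Prod.exists]
    constructor
    · rintro ⟨x, hx, hμ⟩
      exact ⟨x, μ, ⟨⟨hx, hbounded x hx hμ⟩, hμ⟩, rfl⟩
    · rintro ⟨x, μ, ⟨⟨hx, -⟩, hμ⟩, rfl⟩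
      exact ⟨x, hx, hμ⟩
  rw [himage]
  exact ((hs.prod (isCompact_closedBall 0 R)).inter_right
    (isClosed_setOf_mem_spectrum hB)).image continuous_snd

end

theorem exists_mem_spectrum_mem_connectedComponentIn [PreconnectedSpace X]
    {B : X → Matrix m m ℂ} (hB : Continuous B) {K : Set ℂ} (hK : IsCompact K)
    (hBK : ∀ x, spectrum ℂ (B x) ⊆ K) (x₀ : X) {x₁ : X} {w : ℂ} (hw : w ∈ spectrum ℂ (B x₁)) :
    ∃ μ ∈ spectrum ℂ (B x₀), μ ∈ connectedComponentIn K w := by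
  by_contra! hfar
  have hwK : w ∈ K := hBK x₁ hw
  have : CompactSpace K := isCompact_iff_compactSpace.mp hK
  set F : Set K := Subtype.val ⁻¹' spectrum ℂ (B x₀)
  have hF : IsClosed F := (finite_spectrum _).isClosed.preimage continuous_subtype_val
  have hdisj : Disjoint (connectedComponent (⟨w, hwK⟩ : K)) F := by
    refine Set.disjoint_left.mpr fun y hy hyF => hfar y hyF ?_
    rw [connectedComponentIn_eq_image hwK]
    exact ⟨y, hy, rfl⟩
  obtain ⟨V, hV, hwV, hVF⟩ := exists_isClopen_mem_disjoint_of_disjoint_connectedComponent hF hdisj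
  obtain ⟨U, hU, rfl⟩ := isOpen_induced_iff.mp hV.isOpen
  have hKU : IsCompact (K ∩ U) := by
    simpa [Subtype.image_preimage_coe] using hV.isClosed.isCompact.image continuous_subtype_val
  have hclopen : IsClopen {x | (spectrum ℂ (B x) ∩ U).Nonempty} := by
    refine ⟨?_, isOpen_setOf_spectrum_inter_nonempty hB hU⟩
    convert isClosed_setOf_spectrum_inter_nonempty hB hKU using 4 with x
    rw [← Set.inter_assoc, Set.inter_eq_left.mpr (hBK x)]
  obtain ⟨μ, hμ, hμU⟩ : (spectrum ℂ (B x₀) ∩ U).Nonempty :=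
    Set.eq_univ_iff_forall.mp (hclopen.eq_univ ⟨x₁, w, hw, hwV⟩) x₀
  exact Set.disjoint_left.mp hVF (show (⟨μ, hBK x₀ hμ⟩ : K) ∈ Subtype.val ⁻¹' U from hμU) hμ

end Matrix

section StructuredPseudospectrum

variable {n : ℕ} {S : Finset (Fin n × Fin n)}

theorem continuous_MS : Continuous (MS S) := by
  refine continuous_pi fun i => continuous_pi fun j => ?_
  unfold MS
  split_ifs with h
  · exact (EuclideanSpace.proj (⟨(i, j), h⟩ : {p : Fin n × Fin n // p ∈ S})).continuous
  · exact continuous_const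

@[simp]
theorem MS_zero : MS S 0 = 0 := by
  ext i j
  simp [MS]

theorem isCompact_structPseudo (A : Matrix (Fin n) (Fin n) ℂ) (S : Finset (Fin n × Fin n))
    (ε : ℝ) : IsCompact (structPseudo A S ε) := by
  have hball : {z : EuclideanSpace ℂ {p : Fin n × Fin n // p ∈ S} | ‖z‖ ≤ ε} =
      Metric.closedBall 0 ε := by
    ext z
    simp
  rw [structPseudo, hball]
  exact Matrix.isCompact_biUnion_spectrum (continuous_const.add continuous_MS)
    (isCompact_closedBall 0 ε)

/-- Each eigenvalue of `A + MS S z` is joined to an eigenvalue of `A` along the segment of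
perturbations `t • z`, `t ∈ [0, 1]`, all of which lie in the pseudospectrum. -/
theorem exists_mem_spectrum_mem_connectedComponentIn_structPseudo
    {A : Matrix (Fin n) (Fin n) ℂ} {ε : ℝ} {w : ℂ} (hw : w ∈ structPseudo A S ε) :
    ∃ μ ∈ spectrum ℂ A, μ ∈ connectedComponentIn (structPseudo A S ε) w := by
  obtain ⟨z, hz, hwz⟩ := Set.mem_iUnion₂.mp hw
  have hsegment : ∀ t : unitInterval,
      spectrum ℂ (A + MS S ((t : ℝ) • z)) ⊆ structPseudo A S ε := fun t =>
    Set.subset_biUnion_of_mem (u := fun z => spectrum ℂ (A + MS S z))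
      (show ‖(t : ℝ) • z‖ ≤ ε by
        rw [norm_smul, Real.norm_of_nonneg t.2.1]
        exact (mul_le_of_le_one_left (norm_nonneg z) t.2.2).trans hz)
  simpa using Matrix.exists_mem_spectrum_mem_connectedComponentIn
    (continuous_const.add (continuous_MS.comp (continuous_subtype_val.smul continuous_const)))
    (isCompact_structPseudo A S ε) hsegment 0 (x₁ := 1) (by simpa using hwz)

end StructuredPseudospectrum

theorem structPseudo_ncard_components_le_general {n : ℕ} (A : Matrix (Fin n) (Fin n) ℂ)
    (S : Finset (Fin n × Fin n)) (ε : ℝ) :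
    {T : Set ℂ | ∃ w ∈ structPseudo A S ε,
        T = connectedComponentIn (structPseudo A S ε) w}.ncard ≤ n := by
  have hcomponents : {T : Set ℂ | ∃ w ∈ structPseudo A S ε,
        T = connectedComponentIn (structPseudo A S ε) w} ⊆
      (connectedComponentIn (structPseudo A S ε)) '' spectrum ℂ A := by
    rintro _ ⟨w, hw, rfl⟩
    obtain ⟨μ, hμ, hμw⟩ := exists_mem_spectrum_mem_connectedComponentIn_structPseudo hw
    exact ⟨μ, hμ, (connectedComponentIn_eq hμw).symm⟩
  calc _ ≤ ((connectedComponentIn (structPseudo A S ε)) '' spectrum ℂ A).ncard :=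
        Set.ncard_le_ncard hcomponents ((Matrix.finite_spectrum A).image _)
    _ ≤ (spectrum ℂ A).ncard := Set.ncard_image_le (Matrix.finite_spectrum A)
    _ ≤ n := by simpa using Matrix.ncard_spectrum_le A

/-- The structured ε-pseudospectrum has at most `n` connected components. -/
theorem structPseudo_ncard_components_le {n : ℕ} (A : Matrix (Fin n) (Fin n) ℂ)
    (S : Finset (Fin n × Fin n)) (ε : ℝ) (hε : 0 < ε) :
    {T : Set ℂ | ∃ w ∈ structPseudo A S ε,
        T = connectedComponentIn (structPseudo A S ε) w}.ncard ≤ n :=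
  structPseudo_ncard_components_le_general A S ε
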